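/- arXiv:2005.04449 — 3 statements merged into one kernel-verified Lean document; each statement's English description precedes it below -/
import Mathlib

section
/- For every integer n ≥ 2 there exists a constant C = C(n) > 0 such that for every 0 < ε < 1 and every Lipschitz function v : S^{n−1} → ℝ with ‖v‖_{W^{1,∞}(S^{n−1})} ≤ ε and ∫_{S^{n−1}} (1 + v(ξ))^n dH^{n−1} = n ω_n, one has |∫_{S^{n−1}} v(ξ) dH^{n−1} + (n−1)/2 · ∫_{S^{n−1}} v(ξ)² dH^{n−1}| ≤ C ε ∫_{S^{n−1}} v(ξ)² dH^{n−1}. -/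
open MeasureTheory Metric Set Filter

noncomputable section

/-- Euclidean space `ℝ^n`. -/
abbrev Euc (n : ℕ) := EuclideanSpace ℝ (Fin n)

/-- `ω_n`, the volume of the unit ball in `ℝ^n`. -/
def unitBallVol (n : ℕ) : ℝ := (volume (Metric.ball (0 : Euc n) 1)).toReal

/-- The tangential gradient of `v` on the unit sphere `S^{n-1}`, i.e. the gradient at `ξ`
of the `0`-homogeneous extension `x ↦ v (x/|x|)`. -/
def sphGrad {n : ℕ} (v : Euc n → ℝ) (ξ : Euc n) : Euc n :=
  gradient (fun x => v (‖x‖⁻¹ • x)) ξ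

/-- `‖v‖_{W^{1,∞}(S^{n-1})} ≤ ε`: both `|v|` and the tangential gradient `|∇v|`
are bounded by `ε` on the unit sphere. -/
def W1InfLe {n : ℕ} (v : Euc n → ℝ) (ε : ℝ) : Prop :=
  ∀ ξ ∈ Metric.sphere (0 : Euc n) 1, |v ξ| ≤ ε ∧ ‖sphGrad v ξ‖ ≤ ε

/-- `Ω₀` is a nearly spherical set parametrized over the radius-`R` ball by the
Lipschitz function `v` on `S^{n-1}`:  `Ω₀` is open, bounded, contains the origin,
`Ω₀ = {tξ : ξ ∈ S^{n-1}, 0 ≤ t < R(1+v(ξ))}` (equivalently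
`∂Ω₀ = {Rξ(1+v(ξ))}`), and `|Ω₀| = |B_R|` (`R` being the radius of the ball with
the same measure as `Ω₀`). -/
def IsNearlySpherical {n : ℕ} (R : ℝ) (Ω₀ : Set (Euc n)) (v : Euc n → ℝ) : Prop :=
  IsOpen Ω₀ ∧ Bornology.IsBounded Ω₀ ∧ (0 : Euc n) ∈ Ω₀ ∧
  (∃ c : NNReal, LipschitzOnWith c v (Metric.sphere (0 : Euc n) 1)) ∧
  Ω₀ = {x : Euc n | ∃ ξ ∈ Metric.sphere (0 : Euc n) 1,
          ∃ t : ℝ, 0 ≤ t ∧ t < R * (1 + v ξ) ∧ x = t • ξ} ∧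
  volume Ω₀ = volume (Metric.ball (0 : Euc n) R)

/-- The first Steklov–Dirichlet eigenvalue `σ₁(Ω)` of `Ω = Ω₀ \ closure (B_r)`:
the infimum of the Rayleigh quotients
`∫_Ω |∇w|² dx / ∫_{∂Ω₀} w² dH^{n-1}` over Lipschitz functions `w` on `closure Ω`
vanishing on `∂B_r` with `∫_{∂Ω₀} w² dH^{n-1} > 0`. -/
def sigma1 (n : ℕ) (r : ℝ) (Ω₀ : Set (Euc n)) : ℝ :=
  sInf {q : ℝ | ∃ w : Euc n → ℝ,
    (∃ c : NNReal, LipschitzOnWith c w (closure (Ω₀ \ closure (Metric.ball (0 : Euc n) r)))) ∧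
    (∀ x ∈ Metric.sphere (0 : Euc n) r, w x = 0) ∧
    (0 < ∫ x in frontier Ω₀, (w x) ^ 2 ∂(μH[(n : ℝ) - 1])) ∧
    q = (∫ x in Ω₀ \ closure (Metric.ball (0 : Euc n) r), ‖gradient w x‖ ^ 2) /
        (∫ x in frontier Ω₀, (w x) ^ 2 ∂(μH[(n : ℝ) - 1]))}

/-- The explicit value of the first Steklov–Dirichlet eigenvalue of the spherical
shell `A_{r,R}`: `1/(R log(R/r))` if `n = 2`,  `(n-2)/(R((R/r)^{n-2} - 1))` if `n ≥ 3`. -/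
def shellEig (n : ℕ) (r R : ℝ) : ℝ :=
  if n = 2 then 1 / (R * Real.log (R / r))
  else ((n : ℝ) - 2) / (R * ((R / r) ^ (n - 2) - 1))


/-!
Expanding `(1 + v)ⁿ = 1 + n v + n(n-1)/2 v² + O(|v|³)` turns the volume constraint into
`n (∫ v + (n-1)/2 ∫ v²) = δ + O(ε ∫ v²)` with `δ = n ω_n - H^{n-1}(S^{n-1})`.
Mathlib's Hausdorff measure `μH` carries no normalising constant, so `δ` need not vanish.
If `δ = 0` the expansion is the estimate. Otherwise the constraint keeps `v` away from `0`:
`|δ| ≲ ε` directly, and `δ² ≲ ∫ v²` by Cauchy–Schwarz, so `|δ|³ ≲ ε ∫ v²`, while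
`∫ v + (n-1)/2 ∫ v²` is bounded; this gives the estimate with a constant depending on `δ`.
-/

open Finset in
lemma abs_one_add_pow_sub_quadratic_le {n : ℕ} (hn : 2 ≤ n) {t : ℝ} (ht : |t| ≤ 1) :
    |(1 + t) ^ n - (1 + n * t + n * ((n : ℝ) - 1) / 2 * t ^ 2)| ≤ 2 ^ n * |t| * t ^ 2 := by
  have hsplit : (1 + t) ^ n = (1 + n * t + n * ((n : ℝ) - 1) / 2 * t ^ 2)
      + ∑ k ∈ Ico 3 (n + 1), t ^ k * (n.choose k : ℝ) := by
    rw [add_comm, add_pow, range_eq_Ico,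
      ← sum_Ico_consecutive _ (Nat.zero_le 3) (by omega : 3 ≤ n + 1), ← range_eq_Ico,
      sum_range_succ, sum_range_succ, sum_range_one, Nat.cast_choose_two,
      Nat.choose_zero_right, Nat.choose_one_right]
    simp only [one_pow, mul_one]
    push_cast
    ring
  rw [hsplit, add_sub_cancel_left]
  calc |∑ k ∈ Ico 3 (n + 1), t ^ k * (n.choose k : ℝ)|
      ≤ ∑ k ∈ Ico 3 (n + 1), |t| ^ 3 * (n.choose k : ℝ) := by
        refine (abs_sum_le_sum_abs _ _).trans (sum_le_sum fun k hk => ?_)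
        rw [abs_mul, abs_pow, Nat.abs_cast]
        exact mul_le_mul_of_nonneg_right
          (pow_le_pow_of_le_one (abs_nonneg t) ht (mem_Ico.mp hk).1) (Nat.cast_nonneg _)
    _ ≤ |t| ^ 3 * ∑ k ∈ range (n + 1), (n.choose k : ℝ) := by
        rw [← mul_sum, range_eq_Ico]
        refine mul_le_mul_of_nonneg_left ?_ (by positivity)
        exact sum_le_sum_of_subset_of_nonneg (Ico_subset_Ico_left (Nat.zero_le 3))
          fun _ _ _ => Nat.cast_nonneg _
    _ = 2 ^ n * |t| * t ^ 2 := by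
        rw [← Nat.cast_sum, Nat.sum_range_choose, ← sq_abs t]
        push_cast
        ring

lemma exists_abs_add_le_of_abs_sub_le {N K S : ℝ} (hN : 1 ≤ N) (hK : 0 < K) (hS : 0 ≤ S)
    (V : ℝ) :
    ∃ C, 0 < C ∧ ∀ ε x y : ℝ, 0 ≤ ε → ε ≤ 1 → 0 ≤ y → |x| ≤ ε * S → y ≤ ε ^ 2 * S →
      x ^ 2 ≤ S * y → |V - (S + N * x + N * (N - 1) / 2 * y)| ≤ K * ε * y →
      |x + (N - 1) / 2 * y| ≤ C * ε * y := by
  set δ := V - S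
  set a := N * (N - 1) / 2
  have ha : 0 ≤ a := by
    have : 0 ≤ N - 1 := by linarith
    positivity
  set K₁ := N + a + K
  set L := 2 * N ^ 2 + 2 * (a + K) ^ 2
  -- For `δ = 0` the second summand is the junk value `_ / 0 = 0`; that case needs only `K / N`.
  refine ⟨K / N + N * K₁ * L * S ^ 3 / |δ| ^ 3, by positivity, ?_⟩
  intro ε x y hε hε1 hy hx hyS hxy hV
  set J := x + (N - 1) / 2 * y
  have hδ : |δ - N * J| ≤ K * ε * y := by
    convert hV using 2; ring
  rcases eq_or_ne δ 0 with hδ0 | hδ0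
  · rw [hδ0, zero_sub, abs_neg, abs_mul, abs_of_pos (by linarith)] at hδ
    calc |J| ≤ K / N * ε * y := by
          rw [div_mul_eq_mul_div, div_mul_eq_mul_div, le_div_iff₀ (by linarith)]
          linarith
      _ ≤ _ := by gcongr; exact le_add_of_nonneg_right (by positivity)
  have hεy : ε * y ≤ y := by nlinarith
  have hεS : ε ^ 2 * S ≤ ε * S := by
    have : ε ^ 2 ≤ ε := by nlinarith
    exact mul_le_mul_of_nonneg_right this hS
  have hyS' : y ≤ S := by nlinarith
  have hsum : |δ| ≤ N * |x| + (a + K) * y := by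
    have hJ : |N * J| ≤ N * |x| + a * y := by
      refine (abs_add_le (N * x) (a * y)).trans_eq ?_ |>.trans_eq' (by congr 1; ring)
      rw [abs_mul, abs_mul, abs_of_nonneg (by linarith : 0 ≤ N), abs_of_nonneg ha,
        abs_of_nonneg hy]
    have hKy : K * ε * y ≤ K * y := by
      rw [mul_assoc]; exact mul_le_mul_of_nonneg_left hεy hK.le
    linarith [abs_sub_abs_le_abs_sub δ (N * J)]
  have hδ1 : |δ| ≤ K₁ * S * ε := by
    have h1 := mul_le_mul_of_nonneg_left hx (by linarith : 0 ≤ N)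
    have h3 := mul_le_mul_of_nonneg_left (hyS.trans hεS) (by linarith : 0 ≤ a + K)
    linarith
  have hδ2 : δ ^ 2 ≤ L * S * y := by
    have h1 : δ ^ 2 ≤ (N * |x| + (a + K) * y) ^ 2 := by
      rw [← sq_abs]; exact pow_le_pow_left₀ (abs_nonneg δ) hsum 2
    have h2 := add_sq_le (a := N * |x|) (b := (a + K) * y)
    have h3 := mul_le_mul_of_nonneg_left hxy (sq_nonneg N)
    have h4 := mul_le_mul_of_nonneg_left (mul_le_mul_of_nonneg_left hyS' hy) (sq_nonneg (a + K))
    rw [mul_pow, mul_pow, sq_abs] at h2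
    nlinarith
  have hJ : |J| ≤ N * S := by
    have h1 := abs_add_le x ((N - 1) / 2 * y)
    rw [abs_mul, abs_of_nonneg (by linarith : 0 ≤ (N - 1) / 2), abs_of_nonneg hy] at h1
    nlinarith
  have hcube : |δ| ^ 3 ≤ K₁ * L * S ^ 2 * (ε * y) := by
    have := mul_le_mul hδ1 hδ2 (sq_nonneg δ) (by positivity)
    rw [← sq_abs δ] at this
    nlinarith
  calc |J| ≤ N * K₁ * L * S ^ 3 / |δ| ^ 3 * ε * y := by
        rw [mul_assoc, div_mul_eq_mul_div, le_div_iff₀ (by positivity)]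
        nlinarith [mul_le_mul hJ hcube (by positivity) (by positivity)]
    _ ≤ _ := by gcongr; exact le_add_of_nonneg_left (by positivity)

section

variable {α : Type*} [MeasurableSpace α] {μ : Measure α} {v : α → ℝ} {ε : ℝ}

lemma isFiniteMeasure_of_integral_one_add_pow_ne_zero {n : ℕ} (hε : ε < 1)
    (hv : ∀ᵐ x ∂μ, |v x| ≤ ε) (h : ∫ x, (1 + v x) ^ n ∂μ ≠ 0) : IsFiniteMeasure μ := by
  have hpos : 0 < (1 - ε) ^ n := pow_pos (sub_pos.2 hε) n
  have hint : Integrable (fun x => (1 + v x) ^ n) μ := by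
    by_contra hni
    exact h (integral_undef hni)
  refine (integrable_const_iff_isFiniteMeasure hpos.ne').1
    (hint.mono' aestronglyMeasurable_const (hv.mono fun x hx => ?_))
  rw [Real.norm_of_nonneg hpos.le]
  exact pow_le_pow_left₀ (sub_pos.2 hε).le (by linarith [(abs_le.1 hx).1]) n

variable [IsFiniteMeasure μ]

lemma sq_integral_le_measureReal_mul_integral_sq (hv : Integrable v μ)
    (hv2 : Integrable (fun x => v x ^ 2) μ) :
    (∫ x, v x ∂μ) ^ 2 ≤ μ.real univ * ∫ x, v x ^ 2 ∂μ := by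
  have hquad : ∀ t : ℝ,
      0 ≤ μ.real univ * (t * t) + (-2 * ∫ x, v x ∂μ) * t + ∫ x, v x ^ 2 ∂μ := by
    intro t
    have hexpand : ∫ x, (v x - t) ^ 2 ∂μ
        = μ.real univ * (t * t) + (-2 * ∫ x, v x ∂μ) * t + ∫ x, v x ^ 2 ∂μ := by
      have hfun : (fun x => (v x - t) ^ 2) = fun x => v x ^ 2 + (-2 * t) * v x + t * t := by
        funext x; ring
      have hlin : Integrable (fun x => v x ^ 2 + (-2 * t) * v x) μ := hv2.add (hv.const_mul _)
      rw [hfun, integral_add hlin (integrable_const _),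
        integral_add hv2 (hv.const_mul _), integral_const_mul, integral_const, smul_eq_mul]
      ring
    exact hexpand ▸ integral_nonneg fun x => sq_nonneg _
  have := discrim_le_zero hquad
  rw [discrim] at this
  linarith

lemma integrable_pow_of_ae_abs_le {f : α → ℝ} {C : ℝ} (hf : AEStronglyMeasurable f μ)
    (hfC : ∀ᵐ x ∂μ, |f x| ≤ C) (k : ℕ) : Integrable (fun x => f x ^ k) μ :=
  .of_bound (hf.pow k) (C ^ k) <| hfC.mono fun x hx => by
    rw [norm_pow, Real.norm_eq_abs]
    exact pow_le_pow_left₀ (abs_nonneg _) hx k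

lemma abs_integral_one_add_pow_sub_le {n : ℕ} (hn : 2 ≤ n) (hε : ε ≤ 1)
    (hmeas : AEStronglyMeasurable v μ) (hv : ∀ᵐ x ∂μ, |v x| ≤ ε) :
    |∫ x, (1 + v x) ^ n ∂μ - (μ.real univ + n * ∫ x, v x ∂μ
        + n * ((n : ℝ) - 1) / 2 * ∫ x, v x ^ 2 ∂μ)| ≤ 2 ^ n * ε * ∫ x, v x ^ 2 ∂μ := by
  have hv1 : Integrable v μ := by simpa using integrable_pow_of_ae_abs_le hmeas hv 1
  have hv2 := integrable_pow_of_ae_abs_le hmeas hv 2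
  have hvn : Integrable (fun x => (1 + v x) ^ n) μ :=
    integrable_pow_of_ae_abs_le (f := fun x => 1 + v x) (C := 2)
      (aestronglyMeasurable_const.add hmeas)
      (hv.mono fun x hx => (abs_add_le _ _).trans (by rw [abs_one]; linarith)) n
  have hlin : Integrable (fun x => 1 + n * v x) μ := (integrable_const 1).add (hv1.const_mul _)
  have hquad : Integrable (fun x => 1 + n * v x + n * ((n : ℝ) - 1) / 2 * v x ^ 2) μ :=
    hlin.add (hv2.const_mul _)
  have hquad_eq : ∫ x, (1 + n * v x + n * ((n : ℝ) - 1) / 2 * v x ^ 2) ∂μ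
      = μ.real univ + n * ∫ x, v x ∂μ + n * ((n : ℝ) - 1) / 2 * ∫ x, v x ^ 2 ∂μ := by
    rw [integral_add hlin (hv2.const_mul _),
      integral_add (integrable_const 1) (hv1.const_mul _), integral_const, integral_const_mul,
      integral_const_mul, smul_eq_mul, mul_one]
  rw [← hquad_eq, ← integral_sub hvn hquad, ← integral_const_mul, ← Real.norm_eq_abs]
  refine norm_integral_le_of_norm_le (hv2.const_mul _) (hv.mono fun x hx => ?_)
  rw [Real.norm_eq_abs]
  refine (abs_one_add_pow_sub_quadratic_le hn (hx.trans hε)).trans ?_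
  gcongr

theorem exists_abs_integral_add_le_mul_integral_sq {n : ℕ} (hn : 2 ≤ n) (μ : Measure α)
    [IsFiniteMeasure μ] (V : ℝ) :
    ∃ C, 0 < C ∧ ∀ ε : ℝ, 0 ≤ ε → ε < 1 → ∀ v : α → ℝ, AEStronglyMeasurable v μ →
      (∀ᵐ x ∂μ, |v x| ≤ ε) → ∫ x, (1 + v x) ^ n ∂μ = V →
      |∫ x, v x ∂μ + ((n : ℝ) - 1) / 2 * ∫ x, v x ^ 2 ∂μ| ≤ C * ε * ∫ x, v x ^ 2 ∂μ := by
  obtain ⟨C, hC, hbound⟩ := exists_abs_add_le_of_abs_sub_le (N := n) (K := 2 ^ n)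
    (by exact_mod_cast one_le_two.trans hn) (by positivity) measureReal_nonneg V
  refine ⟨C, hC, fun ε hε hε1 v hmeas hv hV => hbound ε _ _ hε hε1.le
    (integral_nonneg fun _ => sq_nonneg _) ?_ ?_ ?_
    (hV ▸ abs_integral_one_add_pow_sub_le hn hε1.le hmeas hv)⟩
  · simpa only [Real.norm_eq_abs] using norm_integral_le_of_norm_le_const (f := v) hv
  · have hsq : ∀ᵐ x ∂μ, ‖v x ^ 2‖ ≤ ε ^ 2 := hv.mono fun x hx => by
      rw [norm_pow, Real.norm_eq_abs]
      exact pow_le_pow_left₀ (abs_nonneg _) hx 2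
    exact (le_abs_self _).trans (norm_integral_le_of_norm_le_const hsq)
  · exact sq_integral_le_measureReal_mul_integral_sq
      (by simpa using integrable_pow_of_ae_abs_le hmeas hv 1)
      (integrable_pow_of_ae_abs_le hmeas hv 2)

end

lemma W1InfLe.ae_abs_le {n : ℕ} {v : Euc n → ℝ} {ε : ℝ} (hv : W1InfLe v ε)
    (μ : Measure (Euc n)) :
    ∀ᵐ ξ ∂μ.restrict (sphere 0 1), |v ξ| ≤ ε :=
  (ae_restrict_mem isClosed_sphere.measurableSet).mono fun ξ hξ => (hv ξ hξ).1

lemma unitBallVol_pos (n : ℕ) : 0 < unitBallVol n :=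
  ENNReal.toReal_pos (measure_ball_pos _ _ one_pos).ne' measure_ball_lt_top.ne

/-- Fuglede's lemma, volume-constraint consequence.
For every `n ≥ 2` there exists `C = C(n) > 0` such that for every `0 < ε < 1` and every
Lipschitz `v : S^{n-1} → ℝ` with `‖v‖_{W^{1,∞}} ≤ ε` and `∫_{S^{n-1}} (1+v)ⁿ dH^{n-1} = n ω_n`,
one has `|∫ v + (n-1)/2 ∫ v²| ≤ C ε ∫ v²`. -/
theorem fuglede_volume_constraint_estimate (n : ℕ) (hn : 2 ≤ n) :
    ∃ C : ℝ, 0 < C ∧ ∀ ε : ℝ, 0 < ε → ε < 1 →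
      ∀ v : Euc n → ℝ,
        (∃ c : NNReal, LipschitzOnWith c v (Metric.sphere (0 : Euc n) 1)) →
        W1InfLe v ε →
        (∫ ξ in Metric.sphere (0 : Euc n) 1, (1 + v ξ) ^ n ∂(μH[(n : ℝ) - 1])) =
          n * unitBallVol n →
        |(∫ ξ in Metric.sphere (0 : Euc n) 1, v ξ ∂(μH[(n : ℝ) - 1])) +
            ((n : ℝ) - 1) / 2 *
              ∫ ξ in Metric.sphere (0 : Euc n) 1, (v ξ) ^ 2 ∂(μH[(n : ℝ) - 1])| ≤
          C * ε * ∫ ξ in Metric.sphere (0 : Euc n) 1, (v ξ) ^ 2 ∂(μH[(n : ℝ) - 1]) := by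
  set μ := (μH[(n : ℝ) - 1]).restrict (sphere (0 : Euc n) 1)
  by_cases hμ : IsFiniteMeasure μ
  · obtain ⟨C, hC, hbound⟩ := exists_abs_integral_add_le_mul_integral_sq hn μ (n * unitBallVol n)
    refine ⟨C, hC, fun ε hε hε1 v ⟨c, hv⟩ hW hV => hbound ε hε.le hε1 v ?_ (hW.ae_abs_le _) hV⟩
    exact hv.continuousOn.aestronglyMeasurable isClosed_sphere.measurableSet
  · have hV : (n : ℝ) * unitBallVol n ≠ 0 :=
      mul_ne_zero (Nat.cast_ne_zero.2 (by omega)) (unitBallVol_pos n).ne'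
    exact ⟨1, one_pos, fun ε _ hε1 v _ hW hvol =>
      absurd (isFiniteMeasure_of_integral_one_add_pow_ne_zero hε1 (hW.ae_abs_le _)
        (hvol ▸ hV)) hμ⟩
end
end

section
/- Let n ≥ 3 and 0 < r < R, and define z : ℝ^n \ {0} → ℝ by z(x) = r^{2−n} − |x|^{2−n}. Then: (i) z is harmonic on the shell A_{r,R} = {r < |x| < R} (its Laplacian, the sum of its second pure partial derivatives, vanishes there); (ii) z = 0 on the sphere {|x| = r}; and (iii) for every x with |x| = R, the outward normal derivative ∇z(x)·(x/|x|) equals σ · z(x) with σ = (n−2)/(R((R/r)^{n−2} − 1)). Hence z is an eigenfunction of the Steklov–Dirichlet problem on A_{r,R} with eigenvalue σ. -/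
open Metric
open scoped RealInnerProductSpace

noncomputable section

/-- The radial function `z(x) = r^{2-n} - |x|^{2-n}` (dimension `n ≥ 3`). -/
def zShell (n : ℕ) (r : ℝ) (x : Euc n) : ℝ := r ^ (2 - (n : ℤ)) - ‖x‖ ^ (2 - (n : ℤ))

/-! The function `z` is `c - ‖x‖ ^ p` with `p = 2 - n`. For a radial power, the second derivative
along a unit vector `v` is `p ‖x‖^(p-2) + p (p-2) ‖x‖^(p-4) ⟪x, v⟫²`; summed over an orthonormal
basis this gives `p (p + n - 2) ‖x‖^(p-2)`, which vanishes for `p = 2 - n`. The normal derivative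
on `‖x‖ = R` is `(n - 2) R^(1-n)`, and the eigenvalue comes from
`r^(2-n) - R^(2-n) = R^(2-n) ((R/r)^(n-2) - 1)`. -/

open Topology

section NormRpow

variable {E : Type*} [NormedAddCommGroup E] [InnerProductSpace ℝ E]

theorem hasFDerivAt_norm_rpow_of_ne_zero (p : ℝ) {x : E} (hx : x ≠ 0) :
    HasFDerivAt (fun y : E ↦ ‖y‖ ^ p) ((p * ‖x‖ ^ (p - 2)) • innerSL ℝ x) x := by
  convert (hasStrictFDerivAt_norm_sq x).hasFDerivAt.rpow_const (p := p / 2) (by simp [hx])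
    using 1
  · ext y
    simp only [← Real.rpow_natCast_mul (norm_nonneg _)]
    ring_nf
  · simp_rw [← Real.rpow_natCast_mul (norm_nonneg _), ← Nat.cast_smul_eq_nsmul ℝ, smul_smul]
    ring_nf

theorem fderiv_norm_rpow_apply (p : ℝ) {x : E} (hx : x ≠ 0) (v : E) :
    fderiv ℝ (fun y : E ↦ ‖y‖ ^ p) x v = p * ‖x‖ ^ (p - 2) * ⟪x, v⟫ := by
  simp [(hasFDerivAt_norm_rpow_of_ne_zero p hx).fderiv]

theorem fderiv_fderiv_norm_rpow_apply (p : ℝ) {x : E} (hx : x ≠ 0) (v : E) :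
    fderiv ℝ (fun y ↦ fderiv ℝ (fun y : E ↦ ‖y‖ ^ p) y v) x v =
      p * ‖x‖ ^ (p - 2) * ‖v‖ ^ 2 + p * (p - 2) * ‖x‖ ^ (p - 4) * ⟪x, v⟫ ^ 2 := by
  have h_near : (fun y ↦ fderiv ℝ (fun y : E ↦ ‖y‖ ^ p) y v) =ᶠ[𝓝 x]
      fun y ↦ p * ‖y‖ ^ (p - 2) * ⟪v, y⟫ := by
    filter_upwards [isOpen_ne.mem_nhds hx] with y hy
    rw [fderiv_norm_rpow_apply p hy, real_inner_comm]
  have h_deriv : HasFDerivAt (fun y ↦ p * ‖y‖ ^ (p - 2) * ⟪v, y⟫) _ x :=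
    ((hasFDerivAt_norm_rpow_of_ne_zero (p - 2) hx).const_mul p).mul (innerSL ℝ v).hasFDerivAt
  rw [h_near.fderiv_eq, h_deriv.fderiv]
  simp only [add_apply, smul_apply, coe_innerSL_apply, real_inner_self_eq_norm_sq,
    real_inner_comm v x, smul_eq_mul]
  ring_nf

theorem sum_fderiv_fderiv_norm_rpow {ι : Type*} [Fintype ι] (b : OrthonormalBasis ι ℝ E)
    (p : ℝ) {x : E} (hx : x ≠ 0) :
    ∑ i, fderiv ℝ (fun y ↦ fderiv ℝ (fun y : E ↦ ‖y‖ ^ p) y (b i)) x (b i) =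
      p * (p + Fintype.card ι - 2) * ‖x‖ ^ (p - 2) := by
  have h_pow : ‖x‖ ^ (p - 4) * ‖x‖ ^ 2 = ‖x‖ ^ (p - 2) := by
    rw [← Real.rpow_natCast, ← Real.rpow_add (norm_pos_iff.mpr hx)]
    norm_num
    ring_nf
  simp only [fderiv_fderiv_norm_rpow_apply p hx, b.norm_eq_one, Finset.sum_add_distrib,
    ← Finset.mul_sum, b.sum_sq_inner_left]
  simp only [one_pow, Finset.sum_const, Finset.card_univ, nsmul_eq_mul, mul_one]
  linear_combination p * (p - 2) * h_pow

theorem inner_gradient_const_sub_norm_rpow [CompleteSpace E] (c p : ℝ) {x : E} (hx : x ≠ 0) :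
    ⟪gradient (fun y : E ↦ c - ‖y‖ ^ p) x, ‖x‖⁻¹ • x⟫ = -p * ‖x‖ ^ (p - 1) := by
  rw [inner_gradient_left, fderiv_const_sub, neg_apply,
    fderiv_norm_rpow_apply p hx, real_inner_smul_right, real_inner_self_eq_norm_sq]
  have h_pow : ‖x‖ ^ (p - 1) = ‖x‖ ^ (p - 2) * ‖x‖ := by
    rw [← Real.rpow_add_one (norm_ne_zero_iff.mpr hx)]
    ring_nf
  rw [h_pow]
  field_simp [norm_ne_zero_iff.mpr hx]

end NormRpow

theorem fderiv_fderiv_const_sub_apply {E F : Type*} [NormedAddCommGroup E] [NormedSpace ℝ E]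
    [NormedAddCommGroup F] [NormedSpace ℝ F] (c : F) (f : E → F) (x v w : E) :
    fderiv ℝ (fun y ↦ fderiv ℝ (fun y ↦ c - f y) y v) x w =
      -fderiv ℝ (fun y ↦ fderiv ℝ f y v) x w := by
  simp only [fderiv_const_sub, neg_apply, fderiv_fun_neg]

theorem div_mul_sub_rpow_neg {q r R : ℝ} (hq : 0 < q) (hr : 0 < r) (hrR : r < R) :
    q / (R * ((R / r) ^ q - 1)) * (r ^ (-q) - R ^ (-q)) = q * R ^ (-q - 1) := by
  have hR : 0 < R := hr.trans hrR
  have h_lt : r ^ q < R ^ q := Real.rpow_lt_rpow hr.le hrR hq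
  rw [Real.div_rpow hR.le hr.le, Real.rpow_neg hr.le, Real.rpow_neg hR.le,
    Real.rpow_sub_one hR.ne', Real.rpow_neg hR.le]
  have hr_pow : 0 < r ^ q := Real.rpow_pos_of_pos hr q
  have h_sub : R ^ q - r ^ q ≠ 0 := (sub_pos.mpr h_lt).ne'
  field_simp

theorem zShell_eq_sub_norm_rpow (n : ℕ) (r : ℝ) :
    zShell n r = fun x ↦ r ^ (2 - (n : ℤ)) - ‖x‖ ^ (2 - (n : ℝ)) := by
  ext x
  simp [zShell, ← Real.rpow_intCast]

/-- Let `n ≥ 3` and `0 < r < R`, and let `z(x) = r^{2-n} - |x|^{2-n}`.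
Then (i) `z` is harmonic on the shell `A_{r,R}` (the sum of its second pure partial
derivatives vanishes there); (ii) `z = 0` on the sphere `{|x| = r}`; and (iii) on
`{|x| = R}` the outward normal derivative `∇z(x)·(x/|x|)` equals `σ z(x)` with
`σ = (n-2)/(R((R/r)^{n-2} - 1))`.  Hence `z` is a Steklov–Dirichlet eigenfunction on
`A_{r,R}` with eigenvalue `σ`. -/
theorem zShell_is_steklov_dirichlet_eigenfunction (n : ℕ) (hn : 3 ≤ n) (r R : ℝ)
    (hr : 0 < r) (hrR : r < R) :
    (∀ x : Euc n, r < ‖x‖ → ‖x‖ < R →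
      ∑ i : Fin n,
        fderiv ℝ (fun y => fderiv ℝ (zShell n r) y (EuclideanSpace.single i 1)) x
          (EuclideanSpace.single i 1) = 0) ∧
    (∀ x : Euc n, ‖x‖ = r → zShell n r x = 0) ∧
    (∀ x : Euc n, ‖x‖ = R →
      ⟪gradient (zShell n r) x, ‖x‖⁻¹ • x⟫ =
        (((n : ℝ) - 2) / (R * ((R / r) ^ (n - 2) - 1))) * zShell n r x) := by
  have h_ne : ∀ {x : Euc n} {ρ : ℝ}, 0 < ρ → ρ ≤ ‖x‖ → x ≠ 0 := fun hρ hx ↦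
    norm_pos_iff.mp (hρ.trans_le hx)
  rw [zShell_eq_sub_norm_rpow]
  refine ⟨fun x hrx _ ↦ ?_, fun x hx ↦ by simp [hx, ← Real.rpow_intCast], fun x hx ↦ ?_⟩
  · simp_rw [fderiv_fderiv_const_sub_apply, Finset.sum_neg_distrib,
      ← EuclideanSpace.basisFun_apply, sum_fderiv_fderiv_norm_rpow _ _ (h_ne hr hrx.le)]
    simp
  · have hR : 0 < R := hr.trans hrR
    have hq : (0 : ℝ) < n - 2 := by
      have : (3 : ℝ) ≤ n := by exact_mod_cast hn
      linarith
    beta_reduce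
    rw [inner_gradient_const_sub_norm_rpow _ _ (h_ne hR hx.ge), hx, ← Real.rpow_intCast,
      ← Real.rpow_natCast, Nat.cast_sub (by omega)]
    convert (div_mul_sub_rpow_neg hq hr hrR).symm using 2 <;> push_cast <;> ring_nf
end
end

section
/- Let n = 2 and ω > 0 be fixed, and for r > 0 set R(r) = (r² + ω/π)^{1/2}, so that the annulus A_{r,R(r)} has area ω. Then σ₁(A_{r,R(r)}) = 1 / ( R(r) log(R(r)/r) ) tends to +∞ as r → +∞. -/
/-! Since `log x ≤ x - 1`, `R log(R/r) ≤ R(R - r)/r ≤ (R² - r²)/r`, and under the area constraint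
`R² - r² = ω/π` is constant; hence `σ₁ ≥ π r / ω → ∞`. -/

open Filter

noncomputable section

/-- The outer radius making the annulus `A_{r,R(r)}` have area `ω`: `R(r) = (r² + ω/π)^{1/2}`. -/
def outerRadius2 (ω r : ℝ) : ℝ := Real.sqrt (r ^ 2 + ω / Real.pi)

open Real

theorem mul_log_div_le_sq_sub_sq_div {r R : ℝ} (hr : 0 < r) (hrR : r ≤ R) :
    R * log (R / r) ≤ (R ^ 2 - r ^ 2) / r := by
  have hR : 0 ≤ R := hr.le.trans hrR
  calc R * log (R / r) ≤ R * (R / r - 1) :=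
        mul_le_mul_of_nonneg_left (log_le_sub_one_of_pos (div_pos (hr.trans_le hrR) hr)) hR
    _ = R * (R - r) / r := by field_simp
    _ ≤ (R + r) * (R - r) / r := by gcongr; linarith
    _ = (R ^ 2 - r ^ 2) / r := by ring

theorem mul_log_div_pos {r R : ℝ} (hr : 0 < r) (hrR : r < R) : 0 < R * log (R / r) :=
  mul_pos (hr.trans hrR) (log_pos ((one_lt_div hr).mpr hrR))

theorem div_sq_sub_sq_le_one_div_mul_log_div {r R : ℝ} (hr : 0 < r) (hrR : r < R) :
    r / (R ^ 2 - r ^ 2) ≤ 1 / (R * log (R / r)) := by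
  rw [← one_div_div]
  exact one_div_le_one_div_of_le (mul_log_div_pos hr hrR) (mul_log_div_le_sq_sub_sq_div hr hrR.le)

theorem outerRadius2_sq {ω : ℝ} (hω : 0 ≤ ω) (r : ℝ) :
    outerRadius2 ω r ^ 2 = r ^ 2 + ω / π :=
  sq_sqrt (by positivity)

theorem lt_outerRadius2 {ω r : ℝ} (hω : 0 < ω) (hr : 0 ≤ r) : r < outerRadius2 ω r :=
  (lt_sqrt hr).mpr (lt_add_of_pos_right _ (div_pos hω pi_pos))

/-- Let `n = 2` and `ω > 0`; for `r > 0` set `R(r) = (r² + ω/π)^{1/2}`,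
so that the annulus `A_{r,R(r)}` has area `ω`.  Then
`σ₁(A_{r,R(r)}) = 1/(R(r) log(R(r)/r))` tends to `+∞` as `r → +∞`. -/
theorem annulus_eigenvalue_area_constraint_tendsto_atTop (ω : ℝ) (hω : 0 < ω) :
    Tendsto (fun r : ℝ => 1 / (outerRadius2 ω r * Real.log (outerRadius2 ω r / r)))
      atTop atTop := by
  have hlower : ∀ᶠ r in atTop, r * (π / ω) ≤
      1 / (outerRadius2 ω r * Real.log (outerRadius2 ω r / r)) := by
    filter_upwards [eventually_gt_atTop 0] with r hr
    have h := div_sq_sub_sq_le_one_div_mul_log_div hr (lt_outerRadius2 hω hr.le)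
    rwa [outerRadius2_sq hω.le, add_sub_cancel_left, div_div_eq_mul_div, mul_div_assoc] at h
  exact tendsto_atTop_mono' _ hlower (tendsto_id.atTop_mul_const (div_pos pi_pos hω))

end
end
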